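/- Let X be a finite-dimensional Banach space and E ⊆ X \ {0} a countable set. Then the set of operators T ∈ L(X) for which every x ∈ E is a cyclic vector is a dense Gδ subset of L(X) in the norm topology. -/

import Mathlib

/-!
By Cayley–Hamilton, `x` is cyclic for `T` exactly when `x, Tx, …, T^(d-1)x` (`d = dim X`) form a
basis, i.e. when the Krylov determinant `det(x, Tx, …, T^(d-1)x)` does not vanish. This is an
analytic function of `T`, so its nonvanishing set is open, and it is dense by the identity theorem
as soon as it is not identically zero: a cyclic shift along a basis through `x` makes `x` cyclic.
Baire's theorem in the complete space `L(X)` handles the countable intersection over `E`.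
-/
open Module Set Submodule Polynomial

section LinearAlgebra

variable {K V : Type*} [Field K] [AddCommGroup V] [Module K V]

theorem Module.Basis.det_ne_zero_iff_span_eq_top {ι : Type*} [Fintype ι] [DecidableEq ι]
    (b : Basis ι K V) (v : ι → V) : b.det v ≠ 0 ↔ span K (range v) = ⊤ := by
  rw [← isUnit_iff_ne_zero, ← b.is_basis_iff_det]
  refine ⟨And.right, fun h => ⟨?_, h⟩⟩
  exact linearIndependent_of_top_le_span_of_card_eq_finrank h.ge (finrank_eq_card_basis b).symm

variable [FiniteDimensional K V]

theorem Module.End.span_range_pow_apply_eq_span_range_pow_apply_fin (T : Module.End K V) (x : V) :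
    span K (range fun n : ℕ => (T ^ n) x) =
      span K (range fun i : Fin (finrank K V) => (T ^ (i : ℕ)) x) := by
  refine le_antisymm (span_le.2 ?_) (span_mono ?_)
  · rintro _ ⟨n, rfl⟩
    change (T ^ n) x ∈ _
    rcases subsingleton_or_nontrivial V with hV | hV
    · simp [Subsingleton.elim ((T ^ n) x) 0]
    have hχ : (X ^ n %ₘ T.charpoly).natDegree < finrank K V := by
      rw [← T.charpoly_natDegree]
      exact natDegree_modByMonic_lt _ T.charpoly_monic fun h =>
        finrank_pos.ne (by simpa [h] using T.charpoly_natDegree)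
    rw [T.pow_eq_aeval_mod_charpoly, aeval_eq_sum_range' hχ]
    simp only [LinearMap.sum_apply, LinearMap.smul_apply]
    exact sum_mem fun i hi => smul_mem _ _ (subset_span ⟨⟨i, Finset.mem_range.1 hi⟩, rfl⟩)
  · rintro _ ⟨i, rfl⟩
    exact ⟨i, rfl⟩

theorem exists_basis_fin_finrank_apply_eq {x : V} (hx : x ≠ 0) :
    ∃ (b : Basis (Fin (finrank K V)) K V) (i : Fin (finrank K V)), b i = x := by
  have hli : LinearIndepOn K id ({x} : Set V) := LinearIndepOn.singleton hx
  let b := Basis.extend hli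
  let e := b.indexEquiv (finBasis K V)
  exact ⟨b.reindex e, e ⟨x, hli.subset_extend _ rfl⟩, by simp [b]⟩

theorem exists_finRotate_pow_apply_eq {n : ℕ} (i j : Fin n) :
    ∃ k : ℕ, (finRotate n ^ k) i = j := by
  rcases le_or_gt 2 n with hn | hn
  · have hmoved (l : Fin n) : finRotate n l ≠ l := by
      rw [← Equiv.Perm.mem_support, support_finRotate_of_le hn]
      exact Finset.mem_univ l
    exact (isCycle_finRotate_of_le hn).exists_pow_eq (hmoved i) (hmoved j)
  · exact ⟨0, Fin.ext (by omega)⟩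

theorem Module.End.exists_span_range_pow_apply_eq_top {x : V} (hx : x ≠ 0) :
    ∃ T : Module.End K V, span K (range fun n : ℕ => (T ^ n) x) = ⊤ := by
  obtain ⟨b, i, rfl⟩ := exists_basis_fin_finrank_apply_eq (K := K) hx
  let σ := finRotate (finrank K V)
  let T : Module.End K V := b.constr K (b ∘ σ)
  have hT (k : ℕ) (j : Fin (finrank K V)) : (T ^ k) (b j) = b ((σ ^ k) j) := by
    induction k with
    | zero => rfl
    | succ k ih =>
      rw [pow_succ', Module.End.mul_apply, ih, pow_succ', Equiv.Perm.mul_apply]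
      exact b.constr_basis K _ _
  refine ⟨T, eq_top_iff.2 (b.span_eq ▸ span_mono ?_)⟩
  rintro _ ⟨j, rfl⟩
  obtain ⟨k, hk⟩ := exists_finRotate_pow_apply_eq i j
  exact ⟨k, (hT k i).trans (congrArg b hk)⟩

end LinearAlgebra

theorem AnalyticOnNhd.dense_setOf_ne_zero {𝕜 E F : Type*} [NontriviallyNormedField 𝕜]
    [NormedAddCommGroup E] [NormedSpace 𝕜 E] [PreconnectedSpace E] [NormedAddCommGroup F]
    [NormedSpace 𝕜 F] {f : E → F} (hf : AnalyticOnNhd 𝕜 f univ) {z : E} (hz : f z ≠ 0) :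
    Dense {w | f w ≠ 0} := by
  refine dense_iff_inter_open.2 fun U hU ⟨w, hw⟩ => ?_
  by_contra hempty
  have hvanish : f =ᶠ[nhds w] 0 :=
    Filter.mem_of_superset (hU.mem_nhds hw) fun y hy => not_not.1 fun hfy => hempty ⟨y, hy, hfy⟩
  exact hz (hf.eqOn_zero_of_preconnected_of_eventuallyEq_zero isPreconnected_univ (mem_univ w)
    hvanish (mem_univ z))

section Operators

variable {𝕜 X : Type*} [NontriviallyNormedField 𝕜] [NormedAddCommGroup X] [NormedSpace 𝕜 X]
  [FiniteDimensional 𝕜 X]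

noncomputable def krylovDet (x : X) (T : X →L[𝕜] X) : 𝕜 :=
  (finBasis 𝕜 X).det fun i : Fin (finrank 𝕜 X) => (T ^ (i : ℕ)) x

theorem span_range_pow_apply_eq_top_iff_krylovDet_ne_zero (T : X →L[𝕜] X) (x : X) :
    span 𝕜 (range fun n : ℕ => (T ^ n) x) = ⊤ ↔ krylovDet x T ≠ 0 := by
  have hkrylov :=
    Module.End.span_range_pow_apply_eq_span_range_pow_apply_fin (T : Module.End 𝕜 X) x
  simp only [← ContinuousLinearMap.toLinearMap_pow, ContinuousLinearMap.coe_coe] at hkrylov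
  rw [hkrylov, krylovDet, Basis.det_ne_zero_iff_span_eq_top]

variable [CompleteSpace 𝕜]

theorem analyticAt_krylovDet (x : X) (T : X →L[𝕜] X) : AnalyticAt 𝕜 (krylovDet x) T := by
  have hentry (i j : Fin (finrank 𝕜 X)) :
      AnalyticAt 𝕜 (fun S : X →L[𝕜] X => (finBasis 𝕜 X).repr ((S ^ (j : ℕ)) x) i) T := by
    let coord : X →L[𝕜] 𝕜 := LinearMap.toContinuousLinearMap ((finBasis 𝕜 X).coord i)
    let eval : (X →L[𝕜] X) →L[𝕜] X := ContinuousLinearMap.apply 𝕜 X x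
    exact (coord.analyticAt _).comp ((eval.analyticAt _).comp (analyticAt_id.pow _))
  unfold krylovDet
  simp only [Basis.det_apply, Matrix.det_apply', Basis.toMatrix_apply]
  fun_prop

theorem isOpen_setOf_span_range_pow_apply_eq_top (x : X) :
    IsOpen {T : X →L[𝕜] X | span 𝕜 (range fun n : ℕ => (T ^ n) x) = ⊤} := by
  simp only [span_range_pow_apply_eq_top_iff_krylovDet_ne_zero]
  have hcont : Continuous (krylovDet (𝕜 := 𝕜) x) :=
    continuous_iff_continuousAt.2 fun T => (analyticAt_krylovDet x T).continuousAt
  exact isOpen_ne_fun hcont continuous_const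

end Operators

theorem dense_setOf_span_range_pow_apply_eq_top {X : Type*} [NormedAddCommGroup X]
    [NormedSpace ℂ X] [FiniteDimensional ℂ X] {x : X} (hx : x ≠ 0) :
    Dense {T : X →L[ℂ] X | span ℂ (range fun n : ℕ => (T ^ n) x) = ⊤} := by
  obtain ⟨S, hS⟩ := Module.End.exists_span_range_pow_apply_eq_top (K := ℂ) hx
  have hS' : krylovDet x (LinearMap.toContinuousLinearMap S) ≠ 0 := by
    rw [← span_range_pow_apply_eq_top_iff_krylovDet_ne_zero]
    simpa [Module.End.coe_pow] using hS
  simp only [span_range_pow_apply_eq_top_iff_krylovDet_ne_zero]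
  exact AnalyticOnNhd.dense_setOf_ne_zero (fun T _ => analyticAt_krylovDet x T) hS'

/-- On a finite-dimensional Banach space, given a countable set `E` of nonzero vectors,
the set of operators for which every `x ∈ E` is cyclic is a dense Gδ in the norm topology. -/
theorem stmt5 {X : Type*} [NormedAddCommGroup X] [NormedSpace ℂ X] [FiniteDimensional ℂ X]
    (E : Set X) (hE : E.Countable) (hE0 : 0 ∉ E) :
    Dense {T : X →L[ℂ] X |
        ∀ x ∈ E, Submodule.span ℂ (Set.range fun n : ℕ => (T ^ n) x) = ⊤} ∧
    IsGδ {T : X →L[ℂ] X |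
        ∀ x ∈ E, Submodule.span ℂ (Set.range fun n : ℕ => (T ^ n) x) = ⊤} := by
  have hinter : {T : X →L[ℂ] X | ∀ x ∈ E, span ℂ (range fun n : ℕ => (T ^ n) x) = ⊤} =
      ⋂ x ∈ E, {T | span ℂ (range fun n : ℕ => (T ^ n) x) = ⊤} := by
    ext T
    simp
  rw [hinter]
  exact ⟨dense_biInter_of_isOpen (fun x _ => isOpen_setOf_span_range_pow_apply_eq_top x) hE
      fun x hx => dense_setOf_span_range_pow_apply_eq_top (ne_of_mem_of_not_mem hx hE0),
    .biInter_of_isOpen hE fun x _ => isOpen_setOf_span_range_pow_apply_eq_top x⟩
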